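/- arXiv:2508.12781 — 4 statements merged into one kernel-verified Lean document; each statement's English description precedes it below -/
import Mathlib

section
/- Strengthened weak continuity of majorizable type-2 functionals (Oliva's lemma, strengthened): if Φ : (ℕ → ℕ) → ℕ is majorizable, i.e., there exists Λ : (ℕ → ℕ) → ℕ such that for all f, g : ℕ → ℕ, if g strongly majorizes f then Φ f ≤ Λ g, then for every h : ℕ → ℕ there exists r : ℕ such that for every f : ℕ → ℕ, if f k ≤ h k for all k ≤ r, then Φ f ≤ r. -/
/-- Bezem strong majorizability at type 1. -/
def StrongMaj (f g : ℕ → ℕ) : Prop :=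
  ∀ x y, x ≤ y → f x ≤ g y ∧ g x ≤ g y

/-- A type 2 functional is majorizable. -/
def Majorizable (Φ : (ℕ → ℕ) → ℕ) : Prop :=
  ∃ Λ : (ℕ → ℕ) → ℕ, ∀ f g : ℕ → ℕ, StrongMaj f g → Φ f ≤ Λ g

theorem strengthened_weak_continuity (Φ : (ℕ → ℕ) → ℕ) (hΦ : Majorizable Φ) :
    ∀ h : ℕ → ℕ, ∃ r : ℕ, ∀ f : ℕ → ℕ,
      (∀ k ≤ r, f k ≤ h k) → Φ f ≤ r := by
  obtain ⟨Λ, hΛ⟩ := hΦ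
  intro h
  by_contra hc
  push_neg at hc
  choose f hf1 hf2 using hc
  -- M is the monotone majorant of h
  set M : ℕ → ℕ := fun x => (Finset.range (x + 1)).sup h with hM
  -- g folds in the values of f n only at positions > n
  set g : ℕ → ℕ := fun y =>
    max (M y) ((Finset.range y).sup fun n => (Finset.range (y + 1)).sup (f n)) with hg
  have hMmono : ∀ x y : ℕ, x ≤ y → M x ≤ M y := by
    intro x y hxy
    exact Finset.sup_mono (Finset.range_subset_range.mpr (by omega))
  have hmaj : ∀ n, StrongMaj (f n) g := by
    intro n x y hxy
    constructor
    · rcases le_or_gt y n with hyn | hny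
      · have h1 : f n x ≤ h x := hf1 n x (le_trans hxy hyn)
        have h2 : h x ≤ M y := Finset.le_sup (Finset.mem_range.mpr (by omega))
        exact le_trans h1 (le_trans h2 (le_max_left _ _))
      · have h1 : f n x ≤ (Finset.range (y + 1)).sup (f n) :=
          Finset.le_sup (Finset.mem_range.mpr (by omega))
        have h2 : (Finset.range (y + 1)).sup (f n) ≤
            (Finset.range y).sup fun m => (Finset.range (y + 1)).sup (f m) :=
          Finset.le_sup (f := fun m => (Finset.range (y + 1)).sup (f m))
            (Finset.mem_range.mpr hny)
        exact le_trans h1 (le_trans h2 (le_max_right _ _))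
    · apply max_le
      · exact le_trans (hMmono x y hxy) (le_max_left _ _)
      · refine le_trans ?_ (le_max_right _ _)
        apply Finset.sup_le
        intro m hm
        have h1 : (Finset.range (x + 1)).sup (f m) ≤ (Finset.range (y + 1)).sup (f m) :=
          Finset.sup_mono (Finset.range_subset_range.mpr (by omega))
        refine le_trans h1 (Finset.le_sup (f := fun m => (Finset.range (y + 1)).sup (f m)) ?_)
        have := Finset.mem_range.mp hm
        exact Finset.mem_range.mpr (by omega)
  have hbound := hΛ (f (Λ g)) g (hmaj (Λ g))
  exact absurd hbound (not_le.mpr (hf2 (Λ g)))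
end

section
/- Weak continuity of majorizable type-2 functionals: if Φ : (ℕ → ℕ) → ℕ is majorizable (there exists Λ such that Φ f ≤ Λ g whenever g strongly majorizes f), then for every h : ℕ → ℕ there exists r : ℕ such that for every f : ℕ → ℕ, if f k = h k for all k ≤ r, then Φ f ≤ r. -/
theorem weak_continuity (Φ : (ℕ → ℕ) → ℕ) (hΦ : Majorizable Φ) :
    ∀ h : ℕ → ℕ, ∃ r : ℕ, ∀ f : ℕ → ℕ,
      (∀ k ≤ r, f k = h k) → Φ f ≤ r := by
  obtain ⟨Λ, hΛ⟩ := hΦ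
  intro h
  by_contra hc
  push_neg at hc
  choose f hf1 hf2 using hc
  set G : ℕ → ℕ := fun y => Finset.sup (Finset.range (y+1))
    (fun x => max (h x) (Finset.sup (Finset.range (x+1)) (fun r => f r x))) with hG
  have hGmono : ∀ x y : ℕ, x ≤ y → G x ≤ G y := by
    intro x y hxy
    apply Finset.sup_mono
    intro a ha
    simp only [Finset.mem_range] at *
    omega
  have hmaj : ∀ r, StrongMaj (f r) G := by
    intro r x y hxy
    refine ⟨?_, hGmono x y hxy⟩
    have hb : f r x ≤ max (h x) (Finset.sup (Finset.range (x+1)) (fun s => f s x)) := by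
      rcases le_or_gt r x with hrx | hxr
      · exact le_max_of_le_right (Finset.le_sup (f := fun s => f s x) (Finset.mem_range.mpr (Nat.lt_succ_of_le hrx)))
      · rw [hf1 r x (by omega)]; exact le_max_left _ _
    calc f r x ≤ _ := hb
      _ ≤ G y := Finset.le_sup (f := fun x => max (h x) (Finset.sup (Finset.range (x+1)) (fun r => f r x)))
          (Finset.mem_range.mpr (Nat.lt_succ_of_le hxy))
  exact absurd (hΛ (f (Λ G)) G (hmaj (Λ G))) (not_le.mpr (hf2 (Λ G)))
end

section
/- Characterization of the type-2 level of the structure C^≤: a functional Φ : (ℕ → ℕ) → ℕ is majorizable (there exists Λ such that Φ f ≤ Λ g whenever g strongly majorizes f) if and only if there exist Ψ : (ℕ → ℕ) → ℕ and μ : (ℕ → ℕ) → Finset ℕ such that for all h, f : ℕ → ℕ, if for every k in μ h and every n ≤ k one has f n ≤ h k, then Φ f ≤ Ψ h. -/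
theorem Cleq_characterization (Φ : (ℕ → ℕ) → ℕ) :
    Majorizable Φ ↔
    ∃ (Ψ : (ℕ → ℕ) → ℕ) (μ : (ℕ → ℕ) → Finset ℕ),
      ∀ h f : ℕ → ℕ, (∀ k ∈ μ h, ∀ n ≤ k, f n ≤ h k) → Φ f ≤ Ψ h := by
  constructor
  · rintro ⟨Λ, hΛ⟩
    have key : ∀ h : ℕ → ℕ, ∃ N B : ℕ,
        ∀ f : ℕ → ℕ, (∀ k ≤ N, ∀ n ≤ k, f n ≤ h k) → Φ f ≤ B := by
      intro h
      by_contra hc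
      push_neg at hc
      choose F hF1 hF2 using hc
      -- diagonal witnesses
      set f : ℕ → ℕ → ℕ := fun k => F k k with hf
      -- pointwise bound
      set M : ℕ → ℕ := fun n => max (h n) ((Finset.range n).sup fun k => f k n) with hM
      -- monotone hull
      set G : ℕ → ℕ := fun n => (Finset.range (n + 1)).sup M with hG
      have hGmono : ∀ x y, x ≤ y → G x ≤ G y := by
        intro x y hxy
        exact Finset.sup_mono (Finset.range_subset_range.mpr (by omega))
      have hMG : ∀ n, M n ≤ G n := by
        intro n
        exact Finset.le_sup (Finset.mem_range.mpr (by omega))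
      have hfM : ∀ k n, f k n ≤ M n := by
        intro k n
        rcases le_or_gt n k with hnk | hkn
        · exact le_trans (hF1 k k n hnk n le_rfl) (le_max_left _ _)
        · exact le_trans (Finset.le_sup (f := fun k => f k n)
            (Finset.mem_range.mpr hkn)) (le_max_right _ _)
      have hsm : ∀ k, StrongMaj (f k) G := by
        intro k x y hxy
        exact ⟨le_trans (hfM k x) (le_trans (hMG x) (hGmono x y hxy)), hGmono x y hxy⟩
      have h1 : Φ (f (Λ G)) ≤ Λ G := hΛ _ _ (hsm (Λ G))
      have h2 : Λ G < Φ (f (Λ G)) := hF2 (Λ G) (Λ G)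
      omega
    choose N B hNB using key
    refine ⟨B, fun h => Finset.range (N h + 1), ?_⟩
    intro h f hcon
    exact hNB h f fun k hk n hn => hcon k (Finset.mem_range.mpr (by omega)) n hn
  · rintro ⟨Ψ, μ, hΨ⟩
    exact ⟨Ψ, fun f g hsm => hΨ g f fun k _ n hn => (hsm n k hn).1⟩
end

section
/- Obstruction to subsumption for the majorizability interpretation: there do NOT exist t : ℕ → ℕ and a finite set q of naturals such that for every f : ℕ → ℕ, if f i ≤ 1 for all i ≤ n for every n ∈ q, then t strongly majorizes f (i.e., for all x ≤ y, f x ≤ t y and t x ≤ t y). -/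
theorem no_subsumption_for_majorizability :
    ¬ ∃ (t : ℕ → ℕ) (q : Finset ℕ),
        ∀ f : ℕ → ℕ, (∀ n ∈ q, ∀ i ≤ n, f i ≤ 1) → StrongMaj f t := by
  rintro ⟨t, q, h⟩
  set M := q.sup id with hM
  set N := M + 1 with hN
  set f : ℕ → ℕ := fun i => if i ≤ M then 0 else t N + 1 with hf
  have hcond : ∀ n ∈ q, ∀ i ≤ n, f i ≤ 1 := by
    intro n hn i hi
    have : i ≤ M := hi.trans (Finset.le_sup (f := id) hn)
    simp [hf, this]
  have hmaj := (h f hcond) N N le_rfl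
  have hfN : f N = t N + 1 := by simp [hf, hN]
  omega
end
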